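/- arXiv:1806.05515 — 5 statements merged into one kernel-verified Lean document; each statement's English description precedes it below -/
import Mathlib

section
/- For every integer n ≥ 0, the rational number (2n+1)!/(2ⁿ · n!) · Ê_{2n} = (2n+1)(2n−1)⋯3·1 · Ê_{2n} is an integer. -/
/-- Euler numbers of the second kind: `Ê n = (2 - 2^n) * B n` with `B 1 = -1/2`. -/
def eulerSecond (n : ℕ) : ℚ := (2 - 2 ^ n) * bernoulli n

/-!
Comparing coefficients of `t = sinh t · (t / sinh t)` at `t^(2n+1)` gives, for `n ≥ 1`, the
recurrence `∑_{m ≤ n} C(2n+1, 2m) Ê_{2m} = 0`, whose last term is `(2n+1) Ê_{2n}`. Multiplied by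
`(2n-1)‼`, each remaining term is an integer multiple of `(2m+1)‼ Ê_{2m}` with `m < n`, because
`(2m+1)‼ ∣ (2n-1)‼`; so `(2n+1)‼ Ê_{2n}` is an integer by strong induction. Finally
`(2n+1)! / (2ⁿ n!) = (2n+1)‼`.
-/

open Nat Finset PowerSeries

theorem Finset.sum_range_two_mul {M : Type*} [AddCommMonoid M] (f : ℕ → M) (n : ℕ) :
    ∑ k ∈ range (2 * n), f k = ∑ m ∈ range n, (f (2 * m) + f (2 * m + 1)) := by
  induction n with
  | zero => simp
  | succ n ih => rw [mul_add_one, sum_range_succ, sum_range_succ, ih, sum_range_succ, add_assoc]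

theorem Nat.two_mul_add_one_doubleFactorial_dvd {m n : ℕ} (h : m ≤ n) :
    (2 * m + 1)‼ ∣ (2 * n + 1)‼ := by
  rw [doubleFactorial_eq_prod_odd, doubleFactorial_eq_prod_odd]
  exact prod_dvd_prod_of_subset _ _ _ (range_subset_range.mpr h)

theorem PowerSeries.coeff_mk_div_factorial_mul_mk_div_factorial {K : Type*} [Field K] [CharZero K]
    (a b : ℕ → K) (n : ℕ) :
    coeff n (mk (fun k => a k / k !) * mk (fun k => b k / k !)) =
      (∑ k ∈ range (n + 1), n.choose k * a k * b (n - k)) / n ! := by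
  rw [coeff_mul, Nat.sum_antidiagonal_eq_sum_range_succ (fun i j => coeff i _ * coeff j _),
    sum_div]
  refine sum_congr rfl fun k hk => ?_
  rw [coeff_mk, coeff_mk, cast_choose K (mem_range_succ_iff.mp hk)]
  field_simp
  exact (mul_div_mul_right _ _ (cast_ne_zero.mpr (factorial_ne_zero n))).symm

theorem PowerSeries.exp_sub_evalNegHom_exp :
    exp ℚ - evalNegHom (exp ℚ) = mk fun k => (1 - (-1 : ℚ) ^ k) / k ! := by
  ext k
  simp [evalNegHom, coeff_rescale, coeff_exp]
  ring

def eulerSecondPowerSeries : ℚ⟦X⟧ := mk fun n => eulerSecond n / n !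

theorem eulerSecondPowerSeries_eq :
    eulerSecondPowerSeries = C 2 * bernoulliPowerSeries ℚ - rescale 2 (bernoulliPowerSeries ℚ) := by
  ext n
  simp [eulerSecondPowerSeries, bernoulliPowerSeries, coeff_rescale, eulerSecond]
  ring

theorem eulerSecondPowerSeries_mul_exp_sub_evalNegHom_exp :
    eulerSecondPowerSeries * (exp ℚ - evalNegHom (exp ℚ)) = C 2 * X := by
  have hexp : exp ℚ ≠ 0 := fun h => by simpa using congrArg constantCoeff h
  have hsq : exp ℚ ^ 2 = rescale 2 (exp ℚ) := by simpa using exp_pow_eq_rescale_exp (A := ℚ) 2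
  apply mul_right_cancel₀ hexp
  calc eulerSecondPowerSeries * (exp ℚ - evalNegHom (exp ℚ)) * exp ℚ
      = eulerSecondPowerSeries * (exp ℚ ^ 2 - 1) := by
        rw [mul_assoc, sub_mul, mul_comm (evalNegHom _), exp_mul_exp_neg_eq_one]; ring
    _ = C 2 * (bernoulliPowerSeries ℚ * (exp ℚ - 1)) * (exp ℚ + 1) -
          rescale 2 (bernoulliPowerSeries ℚ * (exp ℚ - 1)) := by
        rw [eulerSecondPowerSeries_eq, map_mul, map_sub, map_one, ← hsq]; ring
    _ = C 2 * X * exp ℚ := by rw [bernoulliPowerSeries_mul_exp_sub_one, rescale_X]; ring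

theorem sum_choose_mul_eulerSecond_two_mul {n : ℕ} (hn : n ≠ 0) :
    ∑ m ∈ range (n + 1), ((2 * n + 1).choose (2 * m) : ℚ) * eulerSecond (2 * m) = 0 := by
  have h := congrArg (coeff (2 * n + 1)) eulerSecondPowerSeries_mul_exp_sub_evalNegHom_exp
  rw [exp_sub_evalNegHom_exp, eulerSecondPowerSeries, coeff_mk_div_factorial_mul_mk_div_factorial,
    coeff_C_mul, coeff_X, if_neg (by omega), mul_zero, div_eq_zero_iff,
    or_iff_left (by positivity), show 2 * n + 1 + 1 = 2 * (n + 1) by ring, sum_range_two_mul] at h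
  -- only the terms with `2n+1-k` odd, i.e. `k` even, survive in `t/sinh t · 2 sinh t`
  have hterm : ∀ m ∈ range (n + 1),
      ((2 * n + 1).choose (2 * m) : ℚ) * eulerSecond (2 * m) * (1 - (-1) ^ (2 * n + 1 - 2 * m)) +
        ((2 * n + 1).choose (2 * m + 1) : ℚ) * eulerSecond (2 * m + 1) *
          (1 - (-1) ^ (2 * n + 1 - (2 * m + 1))) =
      ((2 * n + 1).choose (2 * m) : ℚ) * eulerSecond (2 * m) * 2 := by
    intro m hm
    have hmn := mem_range_succ_iff.mp hm
    rw [show 2 * n + 1 - 2 * m = 2 * (n - m) + 1 by omega,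
      show 2 * n + 1 - (2 * m + 1) = 2 * (n - m) by omega, pow_succ, pow_mul]
    norm_num
  rw [sum_congr rfl hterm, ← sum_mul] at h
  simpa using h

theorem doubleFactorial_mul_eulerSecond_mem_bot (n : ℕ) :
    ((2 * n + 1)‼ : ℚ) * eulerSecond (2 * n) ∈ (⊥ : Subring ℚ) := by
  induction n using Nat.strong_induction_on with
  | _ n ih =>
  rcases n with _ | s
  · norm_num [eulerSecond, one_mem]
  have hrec := sum_choose_mul_eulerSecond_two_mul (succ_ne_zero s)
  rw [sum_range_succ, choose_succ_self_right] at hrec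
  have hstep : ((2 * (s + 1) + 1)‼ : ℚ) * eulerSecond (2 * (s + 1)) =
      -∑ m ∈ range (s + 1),
        ((2 * s + 1)‼ : ℚ) * (((2 * (s + 1) + 1).choose (2 * m) : ℚ) * eulerSecond (2 * m)) := by
    rw [← mul_sum, eq_neg_of_add_eq_zero_left hrec, show 2 * (s + 1) + 1 = 2 * s + 1 + 2 by ring,
      doubleFactorial_add_two]
    push_cast
    ring
  rw [hstep]
  refine neg_mem (sum_mem fun m hm => ?_)
  have hms := mem_range_succ_iff.mp hm
  obtain ⟨q, hq⟩ := two_mul_add_one_doubleFactorial_dvd hms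
  rw [hq, cast_mul, show ∀ a b c d : ℚ, a * b * (c * d) = c * b * (a * d) by intros; ring]
  exact mul_mem (mul_mem (natCast_mem _ _) (natCast_mem _ _)) (ih m (by omega))

theorem doubleFactorial_mul_eulerSecond_isInt (n : ℕ) :
    ∃ z : ℤ,
      (((2 * n + 1).factorial : ℚ) / (2 ^ n * n.factorial)) * eulerSecond (2 * n) =
        (z : ℚ) := by
  have hfac : ((2 * n + 1)! : ℚ) / (2 ^ n * n !) = (2 * n + 1)‼ := by
    rw [factorial_eq_mul_doubleFactorial, doubleFactorial_two_mul]
    push_cast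
    field_simp
  obtain ⟨z, hz⟩ := Subring.mem_bot.mp (doubleFactorial_mul_eulerSecond_mem_bot n)
  exact ⟨z, by rw [hfac, hz]⟩
end

section
/- For every nonnegative integer k: Ê₀^{(−k)} = 1, Ê₁^{(−k)} = 2^{k+2} − 2, Ê₂^{(−k)} = 32·3^k − 2^{k+5} + 5, and Ê₃^{(−k)} = 384·4^k − 576·3^k + 220·2^k − 14. -/
/-- Stirling numbers of the second kind (as rationals),
`S(n,j) = (1/j!) ∑_{i=0}^{j} (-1)^{j-i} C(j,i) i^n`. -/
def stirling2 (n j : ℕ) : ℚ :=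
  (1 / j.factorial) *
    ∑ i ∈ Finset.range (j + 1), (-1) ^ (j - i) * (j.choose i : ℚ) * (i : ℚ) ^ n

/-- Poly-Euler numbers of the second kind with negative index `-k`:
`Ê_n^{(-k)} = ((-1)^k/2) ∑_{l=0}^{k} (-1)^l l! S(k,l) ((4l+3)^n + (4l+1)^n)`. -/
def polyEulerSecondNeg (n k : ℕ) : ℚ :=
  ((-1) ^ k / 2) *
    ∑ l ∈ Finset.range (k + 1),
      (-1) ^ l * (l.factorial : ℚ) * stirling2 k l *
        ((4 * (l : ℚ) + 3) ^ n + (4 * (l : ℚ) + 1) ^ n)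

/-!
Write `T_k f = ∑_l (-1)^l l! S(k,l) f(l)`, so that `Ê_n^{(-k)} = ((-1)^k/2) T_k f_n` with
`f_n x = (4x+3)^n + (4x+1)^n`. The recurrence `S(k+1,l+1) = (l+1) S(k,l+1) + S(k,l)` gives
`T_{k+1} f = T_k (L f)` with `(L f)(x) = x f(x) - (x+1) f(x+1)`, and `T_0 f = f(0)`.
The rising factorials `(x+1)(x+2)⋯(x+d)` are eigenfunctions of `L` with eigenvalue `-(d+1)`,
so `T_k` sends them to `(-(d+1))^k d!`; expanding `f_n` in this basis gives the closed forms.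
The recurrence for `S` comes from `l! S(k,l) = Δˡ xᵏ (0)` and the Leibniz rule
`Δ^{m+1}(x g)(y) = y Δ^{m+1} g(y) + (m+1) Δ^m g(y+1)`.
-/

open Finset Function Polynomial fwdDiff

section ForwardDifference

variable {R : Type*} [CommRing R]

theorem fwdDiff_iter_succ_id_mul (g : R → R) (m : ℕ) (y : R) :
    Δ_[1] ^[m + 1] (fun x ↦ x * g x) y =
      y * Δ_[1] ^[m + 1] g y + (m + 1) * Δ_[1] ^[m] g (y + 1) := by
  induction m generalizing y with
  | zero => simp only [zero_add, iterate_one, iterate_zero, id_eq, fwdDiff]; push_cast; ring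
  | succ m ih =>
    rw [iterate_succ_apply', funext ih]
    simp only [fwdDiff, iterate_succ_apply']
    push_cast
    ring

theorem fwdDiff_iter_apply_add_one (g : R → R) (m : ℕ) (y : R) :
    Δ_[1] ^[m] g (y + 1) = Δ_[1] ^[m] g y + Δ_[1] ^[m + 1] g y := by
  rw [iterate_succ_apply', fwdDiff]
  ring

end ForwardDifference

theorem factorial_mul_stirling2 (n j : ℕ) :
    (j.factorial : ℚ) * stirling2 n j = Δ_[1] ^[j] (fun x : ℚ ↦ x ^ n) 0 := by
  rw [fwdDiff_iter_eq_sum_shift, stirling2, ← mul_assoc, mul_one_div_cancel (by positivity),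
    one_mul]
  simp

theorem stirling2_zero_zero : stirling2 0 0 = 1 := by
  simp [stirling2]

theorem stirling2_succ_zero (n : ℕ) : stirling2 (n + 1) 0 = 0 := by
  simp [stirling2]

theorem stirling2_eq_zero_of_lt {n j : ℕ} (h : n < j) : stirling2 n j = 0 := by
  have hj : (j.factorial : ℚ) ≠ 0 := by positivity
  have := factorial_mul_stirling2 n j
  rw [fwdDiff_iter_pow_eq_zero_of_lt h, Pi.zero_apply] at this
  exact (mul_eq_zero.mp this).resolve_left hj

theorem stirling2_succ_succ (n j : ℕ) :
    stirling2 (n + 1) (j + 1) = (j + 1) * stirling2 n (j + 1) + stirling2 n j := by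
  have h := factorial_mul_stirling2 (n + 1) (j + 1)
  simp only [pow_succ'] at h
  rw [fwdDiff_iter_succ_id_mul, zero_mul, zero_add, fwdDiff_iter_apply_add_one,
    ← factorial_mul_stirling2, ← factorial_mul_stirling2, Nat.factorial_succ] at h
  have hj : (j.factorial : ℚ) ≠ 0 := by positivity
  push_cast at h
  apply mul_left_cancel₀ (mul_ne_zero (Nat.cast_add_one_ne_zero j) hj)
  linear_combination h

def stirlingFunctional (k : ℕ) : (ℚ → ℚ) →ₗ[ℚ] ℚ where
  toFun f := ∑ l ∈ range (k + 1), (-1) ^ l * (l.factorial : ℚ) * stirling2 k l * f l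
  map_add' f g := by simp only [Pi.add_apply, mul_add, sum_add_distrib]
  map_smul' c f := by
    simp only [Pi.smul_apply, smul_eq_mul, RingHom.id_apply, mul_sum]
    exact sum_congr rfl fun _ _ ↦ by ring

theorem stirlingFunctional_apply (k : ℕ) (f : ℚ → ℚ) :
    stirlingFunctional k f =
      ∑ l ∈ range (k + 1), (-1) ^ l * (l.factorial : ℚ) * stirling2 k l * f l :=
  rfl

theorem stirlingFunctional_zero (f : ℚ → ℚ) : stirlingFunctional 0 f = f 0 := by
  simp [stirlingFunctional_apply, stirling2_zero_zero]

theorem stirlingFunctional_succ (k : ℕ) (f : ℚ → ℚ) :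
    stirlingFunctional (k + 1) f =
      stirlingFunctional k (fun x ↦ x * f x - (x + 1) * f (x + 1)) := by
  let a (l : ℕ) : ℚ := (-1) ^ l * (l.factorial : ℚ) * stirling2 k l
  have hshift : ∑ l ∈ range (k + 1), a l * (l * f l) =
      ∑ l ∈ range (k + 1), a (l + 1) * ((l + 1) * f (l + 1)) := by
    have h := sum_range_succ' (fun l : ℕ ↦ a l * (l * f l)) (k + 1)
    rw [sum_range_succ] at h
    simp only [a, stirling2_eq_zero_of_lt k.lt_succ_self] at h
    push_cast at h
    simpa using h
  have hrec (l : ℕ) : (-1) ^ (l + 1) * ((l + 1).factorial : ℚ) * stirling2 (k + 1) (l + 1) =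
      (l + 1) * a (l + 1) - (l + 1) * a l := by
    simp only [a, stirling2_succ_succ, Nat.factorial_succ, pow_succ]
    push_cast
    ring
  calc stirlingFunctional (k + 1) f
      = ∑ l ∈ range (k + 1),
          (a (l + 1) * ((l + 1) * f (l + 1)) - a l * ((l + 1) * f (l + 1))) := by
        rw [stirlingFunctional_apply, sum_range_succ', stirling2_succ_zero]
        simp only [hrec, mul_zero, zero_mul, add_zero]
        push_cast
        exact sum_congr rfl fun l _ ↦ by ring
    _ = ∑ l ∈ range (k + 1), a l * (l * f l - (l + 1) * f (l + 1)) := by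
        rw [sum_sub_distrib, ← hshift, ← sum_sub_distrib]
        exact sum_congr rfl fun l _ ↦ by ring

theorem stirlingFunctional_of_eigen {f : ℚ → ℚ} {c : ℚ}
    (hf : ∀ x, x * f x - (x + 1) * f (x + 1) = c * f x) (k : ℕ) :
    stirlingFunctional k f = c ^ k * f 0 := by
  induction k with
  | zero => rw [stirlingFunctional_zero, pow_zero, one_mul]
  | succ k ih =>
    have : (fun x ↦ x * f x - (x + 1) * f (x + 1)) = c • f := funext hf
    rw [stirlingFunctional_succ, this, map_smul, ih, smul_eq_mul, pow_succ']
    ring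

theorem ascPochhammer_eval_add_one_sub {R : Type*} [CommRing R] (d : ℕ) (x : R) :
    x * (ascPochhammer R d).eval (x + 1) - (x + 1) * (ascPochhammer R d).eval (x + 1 + 1) =
      -(d + 1) * (ascPochhammer R d).eval (x + 1) := by
  have h := congrArg (Polynomial.eval (x + 1)) (ascPochhammer_succ_left (S := R) d)
  rw [ascPochhammer_succ_eval, eval_mul, eval_X, eval_comp, eval_add, eval_X, eval_one] at h
  linear_combination h

theorem stirlingFunctional_ascPochhammer (k d : ℕ) :
    stirlingFunctional k (fun x ↦ (ascPochhammer ℚ d).eval (x + 1)) =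
      (-(d + 1)) ^ k * d.factorial := by
  rw [stirlingFunctional_of_eigen (ascPochhammer_eval_add_one_sub d), zero_add,
    ascPochhammer_eval_one]

theorem polyEulerSecondNeg_eq_stirlingFunctional (n k : ℕ) :
    polyEulerSecondNeg n k =
      (-1) ^ k / 2 * stirlingFunctional k (fun x ↦ (4 * x + 3) ^ n + (4 * x + 1) ^ n) :=
  rfl

theorem polyEulerSecondNeg_eq_sum_ascPochhammer {n N : ℕ} (c : Fin N → ℚ)
    (hc : ∀ x : ℚ, (4 * x + 3) ^ n + (4 * x + 1) ^ n =
      ∑ d : Fin N, c d * (ascPochhammer ℚ d).eval (x + 1)) (k : ℕ) :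
    polyEulerSecondNeg n k = (∑ d : Fin N, c d * d.val.factorial * (d + 1 : ℚ) ^ k) / 2 := by
  have hf : (fun x : ℚ ↦ (4 * x + 3) ^ n + (4 * x + 1) ^ n) =
      ∑ d : Fin N, c d • fun x ↦ (ascPochhammer ℚ d).eval (x + 1) := by
    ext x; simp [hc]
  rw [polyEulerSecondNeg_eq_stirlingFunctional, hf, map_sum, mul_sum, sum_div]
  refine sum_congr rfl fun d _ ↦ ?_
  have hsq : ((-1 : ℚ) ^ k) ^ 2 = 1 := by rw [← pow_mul, mul_comm, pow_mul, neg_one_sq, one_pow]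
  rw [map_smul, stirlingFunctional_ascPochhammer, smul_eq_mul, neg_pow ((d : ℕ) + 1 : ℚ)]
  linear_combination (c d * d.val.factorial * (d + 1 : ℚ) ^ k / 2) * hsq

theorem polyEulerSecondNeg_small_n (k : ℕ) :
    polyEulerSecondNeg 0 k = 1 ∧
    polyEulerSecondNeg 1 k = 2 ^ (k + 2) - 2 ∧
    polyEulerSecondNeg 2 k = 32 * 3 ^ k - 2 ^ (k + 5) + 5 ∧
    polyEulerSecondNeg 3 k = 384 * 4 ^ k - 576 * 3 ^ k + 220 * 2 ^ k - 14 := by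
  refine ⟨?_, ?_, ?_, ?_⟩
  · rw [polyEulerSecondNeg_eq_sum_ascPochhammer ![2] (fun x ↦ by simp; norm_num)]
    simp
  · rw [polyEulerSecondNeg_eq_sum_ascPochhammer ![-4, 8]
      (fun x ↦ by simp [Fin.sum_univ_succ]; ring)]
    simp [Fin.sum_univ_succ]; ring
  · rw [polyEulerSecondNeg_eq_sum_ascPochhammer ![10, -64, 32]
      (fun x ↦ by simp [Fin.sum_univ_succ, ascPochhammer_succ_eval]; ring)]
    simp [Fin.sum_univ_succ]; ring
  · rw [polyEulerSecondNeg_eq_sum_ascPochhammer ![-28, 440, -576, 128]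
      (fun x ↦ by simp [Fin.sum_univ_succ, ascPochhammer_succ_eval]; ring)]
    simp [Fin.sum_univ_succ, Nat.factorial]; ring
end

section
/- For all nonnegative integers n and k, ∑_{m=0}^{n} C(n,m) · ((2 − E_{n−m})/4ⁿ) · Ê_m^{(−k)} = ∑_{m=0}^{k} C(k,m) · ((2 − E_{k−m})/4^k) · Ê_m^{(−n)} (a duality formula for poly-Euler numbers of the second kind with negative index). -/
/-!
Expanding `Ê_m^{(-k)}` by its defining formula turns the left-hand side into a combination, over
`l ≤ k`, of the sums `∑_m C(n,m) (2 - E_{n-m}) ((c+1)^m + (c-1)^m)` with `c = 4l + 2`. Since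
`(e^{(c+1)t} + e^{(c-1)t}) / cosh t = 2 e^{ct}`, the binomial theorem shows that such a sum equals
`2 (c+2)^n = 2·4^n (l+1)^n`, so the left-hand side is the poly-Bernoulli number
`B_k^{(-n)} = ∑_l (-1)^{k+l} l! S(k,l) (l+1)^n`. Its symmetry in `n` and `k` follows by substituting
`(l+1)^n = ∑_p (-1)^{n+p} p! S(n,p) C(p+l,p)`, which turns it into a visibly symmetric double sum.
-/

open Finset Nat PowerSeries

section Stirling

variable {R : Type*} [CommRing R]

theorem sum_neg_one_pow_mul_choose_mul_pow_succ (n j : ℕ) :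
    ∑ i ∈ range (j + 2), (-1 : R) ^ (j + 1 - i) * (j + 1).choose i * (i : R) ^ (n + 1) =
      (j + 1) * (∑ i ∈ range (j + 2), (-1 : R) ^ (j + 1 - i) * (j + 1).choose i * (i : R) ^ n +
        ∑ i ∈ range (j + 1), (-1 : R) ^ (j - i) * j.choose i * (i : R) ^ n) := by
  have hext : ∑ i ∈ range (j + 1), (-1 : R) ^ (j - i) * j.choose i * (i : R) ^ n =
      ∑ i ∈ range (j + 2), (-1 : R) ^ (j - i) * j.choose i * (i : R) ^ n := by
    simp [sum_range_succ _ (j + 1)]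
  rw [hext, ← sum_add_distrib, mul_sum]
  refine sum_congr rfl fun i hi => ?_
  obtain hij | rfl : i ≤ j ∨ i = j + 1 := by grind
  · have hsign : (-1 : R) ^ (j + 1 - i) = -(-1) ^ (j - i) := by
      rw [Nat.sub_add_comm hij, pow_succ, mul_neg_one]
    have hchoose : (j.choose i : R) * (j + 1) = (j + 1).choose i * (j + 1 - i) := by
      have h := congrArg (Nat.cast (R := R)) (choose_mul_succ_eq j i)
      push_cast [Nat.cast_sub (show i ≤ j + 1 by omega)] at h
      exact h
    rw [hsign]
    linear_combination -(-1 : R) ^ (j - i) * (i : R) ^ n * hchoose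
  · simp [pow_succ]
    ring

theorem sum_neg_one_pow_mul_choose_mul_pow_eq_factorial_mul_stirlingSecond (n j : ℕ) :
    ∑ i ∈ range (j + 1), (-1 : R) ^ (j - i) * j.choose i * (i : R) ^ n =
      j ! * stirlingSecond n j := by
  induction n generalizing j with
  | zero =>
    have h := add_pow (1 : R) (-1) j
    rw [add_neg_cancel] at h
    cases j with
    | zero => simp
    | succ j => simpa [mul_comm] using h.symm
  | succ n ih =>
    cases j with
    | zero => simp
    | succ j =>
      rw [sum_neg_one_pow_mul_choose_mul_pow_succ, ih, ih, stirlingSecond_succ_succ, factorial_succ]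
      push_cast
      ring

theorem stirling2_eq_stirlingSecond (n j : ℕ) : stirling2 n j = stirlingSecond n j := by
  rw [stirling2, sum_neg_one_pow_mul_choose_mul_pow_eq_factorial_mul_stirlingSecond]
  field_simp

/-- `x ^ n = ∑ p, S(n,p) x (x - 1) ⋯ (x - p + 1)` evaluated at `x = -(q + 1)`. -/
theorem sum_neg_one_pow_mul_factorial_mul_stirlingSecond_mul_choose (n q : ℕ) :
    ∑ p ∈ range (n + 1), (-1 : R) ^ (n + p) * p ! * stirlingSecond n p * (p + q).choose p =
      ((q : R) + 1) ^ n := by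
  induction n with
  | zero => simp
  | succ n ih =>
    set g : ℕ → R := fun p => (-1) ^ (n + p) * p ! * stirlingSecond n p * (p + q).choose p
    have hstep : ∀ p, (-1 : R) ^ (n + 1 + (p + 1)) * (p + 1)! * stirlingSecond (n + 1) (p + 1) *
        (p + 1 + q).choose (p + 1) = (q + 1) * g p + (p * g p - ((p + 1 : ℕ) : R) * g (p + 1)) := by
      intro p
      have hchoose :
          ((p + 1 + q).choose (p + 1) : R) * (p + 1) = (p + 1 + q) * (p + q).choose p := by
        have h := congrArg (Nat.cast (R := R)) (add_one_mul_choose_eq (p + q) p)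
        push_cast at h
        rw [show p + 1 + q = p + q + 1 by omega]
        linear_combination -h
      simp only [g, stirlingSecond_succ_succ, factorial_succ]
      push_cast
      linear_combination (-1 : R) ^ (n + p) * p ! * stirlingSecond n p * hchoose
    rw [sum_range_succ', sum_congr rfl fun p _ => hstep p, sum_add_distrib, ← mul_sum, ih,
      sum_range_sub']
    simp [g, stirlingSecond_eq_zero_of_lt (lt_add_one n)]
    ring

end Stirling

/-- Kaneko's closed formula for the poly-Bernoulli number `B_n^{(-k)}`. -/
def polyBernoulliNeg (n k : ℕ) : ℚ :=
  ∑ l ∈ range (n + 1), (-1) ^ (n + l) * l ! * stirlingSecond n l * ((l : ℚ) + 1) ^ k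

theorem polyBernoulliNeg_comm (n k : ℕ) : polyBernoulliNeg n k = polyBernoulliNeg k n := by
  have hexpand : ∀ n k, polyBernoulliNeg n k = ∑ l ∈ range (n + 1), ∑ p ∈ range (k + 1),
      (-1 : ℚ) ^ (n + l) * l ! * stirlingSecond n l * ((-1) ^ (k + p) * p ! * stirlingSecond k p) *
        (p + l).choose p := by
    intro n k
    rw [polyBernoulliNeg]
    refine sum_congr rfl fun l _ => ?_
    rw [← sum_neg_one_pow_mul_factorial_mul_stirlingSecond_mul_choose, mul_sum]
    exact sum_congr rfl fun p _ => by ring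
  rw [hexpand, hexpand, sum_comm]
  refine sum_congr rfl fun p _ => sum_congr rfl fun l _ => ?_
  rw [add_comm p l, choose_symm_add]
  ring

noncomputable def egf (a : ℕ → ℚ) : ℚ⟦X⟧ := mk fun n => a n / n !

@[simp]
theorem coeff_egf (a : ℕ → ℚ) (n : ℕ) : coeff n (egf a) = a n / n ! := coeff_mk _ _

theorem egf_injective : Function.Injective egf := fun a b h => funext fun n => by
  simpa [factorial_ne_zero] using congrArg (coeff n) h

theorem egf_add (a b : ℕ → ℚ) : egf (a + b) = egf a + egf b := by
  ext n
  simp [add_div]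

theorem egf_mul (a b : ℕ → ℚ) :
    egf a * egf b = egf fun n => ∑ m ∈ range (n + 1), n.choose m * a m * b (n - m) := by
  ext n
  rw [coeff_mul,
    Nat.sum_antidiagonal_eq_sum_range_succ (fun i j => coeff i (egf a) * coeff j (egf b)),
    coeff_egf, sum_div]
  refine sum_congr rfl fun m hm => ?_
  have hmn : m ≤ n := by grind
  rw [coeff_egf, coeff_egf, choose_eq_factorial_div_factorial hmn,
    cast_div (factorial_mul_factorial_dvd_factorial hmn) (by positivity)]
  push_cast
  field_simp

theorem egf_pow (c : ℚ) : egf (c ^ ·) = rescale c (exp ℚ) := by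
  ext n
  simp [coeff_exp, div_eq_mul_inv]

theorem sum_range_two_mul_add_one {M : Type*} [AddCommMonoid M] (f : ℕ → M) (j : ℕ) :
    ∑ m ∈ range (2 * j + 1), f m =
      ∑ i ∈ range (j + 1), f (2 * i) + ∑ i ∈ range j, f (2 * i + 1) := by
  induction j with
  | zero => simp
  | succ j ih =>
    rw [show 2 * (j + 1) + 1 = 2 * j + 1 + 1 + 1 by ring, sum_range_succ, sum_range_succ, ih,
      sum_range_succ (fun i => f (2 * i)) (j + 1), sum_range_succ (fun i => f (2 * i + 1)) j,
      mul_add_one]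
    abel

section Euler

variable {E : ℕ → ℚ} (hE0 : E 0 = 1) (hEodd : ∀ m : ℕ, E (2 * m + 1) = 0)
  (hErec : ∀ m : ℕ, 1 ≤ m → ∑ j ∈ range (m + 1), ((2 * m).choose (2 * j) : ℚ) * E (2 * j) = 0)
include hE0 hEodd hErec

theorem sum_choose_mul_euler_mul_one_add_neg_one_pow (n : ℕ) :
    ∑ m ∈ range (n + 1), n.choose m * E m * (1 + (-1) ^ (n - m)) = if n = 0 then 2 else 0 := by
  have hsign : ∀ m ∈ range (n + 1),
      n.choose m * E m * (1 + (-1) ^ (n - m)) = (1 + (-1) ^ n) * (n.choose m * E m) := by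
    intro m hm
    obtain ⟨i, rfl | rfl⟩ := Nat.even_or_odd' m
    · have hpow : (-1 : ℚ) ^ n = (-1) ^ (n - 2 * i) := by
        rw [← Nat.sub_add_cancel (show 2 * i ≤ n by grind), pow_add, pow_mul]
        simp
      rw [hpow]
      ring
    · simp [hEodd]
  rw [sum_congr rfl hsign, ← mul_sum]
  obtain ⟨j, rfl | rfl⟩ := Nat.even_or_odd' n
  · rcases j.eq_zero_or_pos with rfl | hj
    · norm_num [hE0]
    · have hodd : ∑ i ∈ range j, ((2 * j).choose (2 * i + 1) : ℚ) * E (2 * i + 1) = 0 :=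
        sum_eq_zero fun i _ => by rw [hEodd, mul_zero]
      rw [sum_range_two_mul_add_one, hodd, add_zero, hErec j hj, mul_zero, if_neg (by omega)]
  · simp [pow_succ]

theorem egf_euler_mul_egf_one_add_neg_one_pow : egf E * egf (fun m => 1 + (-1) ^ m) = 2 := by
  rw [egf_mul]
  ext n
  simp_rw [sum_choose_mul_euler_mul_one_add_neg_one_pow hE0 hEodd hErec]
  rw [← map_ofNat C 2, coeff_C]
  rcases n with _ | n <;> simp

theorem sum_choose_mul_euler_mul_add_pow (n : ℕ) (c : ℚ) :
    ∑ m ∈ range (n + 1), n.choose m * E (n - m) * ((c + 1) ^ m + (c - 1) ^ m) = 2 * c ^ n := by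
  have hcosh : egf (fun m => 1 + (-1) ^ m) = rescale 1 (exp ℚ) + rescale (-1) (exp ℚ) := by
    rw [← egf_pow, ← egf_pow, ← egf_add]
    simp [Pi.add_def]
  have hsplit :
      egf (fun m => (c + 1) ^ m + (c - 1) ^ m) = egf (c ^ ·) * egf (fun m => 1 + (-1) ^ m) := by
    rw [hcosh, egf_pow, mul_add, exp_mul_exp_eq_exp_add, exp_mul_exp_eq_exp_add, ← egf_pow,
      ← egf_pow, ← egf_add, sub_eq_add_neg]
    rfl
  have hprod : egf (fun m => (c + 1) ^ m + (c - 1) ^ m) * egf E = egf (fun m => 2 * c ^ m) := by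
    rw [hsplit, mul_assoc, mul_comm (egf _) (egf E),
      egf_euler_mul_egf_one_add_neg_one_pow hE0 hEodd hErec]
    ext n
    rw [← map_ofNat C 2, coeff_mul_C, coeff_egf, coeff_egf]
    ring
  rw [egf_mul] at hprod
  rw [← congrFun (egf_injective hprod) n]
  exact sum_congr rfl fun m _ => by ring

theorem sum_choose_mul_two_sub_euler_mul_add_pow (n : ℕ) (c : ℚ) :
    ∑ m ∈ range (n + 1), n.choose m * (2 - E (n - m)) * ((c + 1) ^ m + (c - 1) ^ m) =
      2 * (c + 2) ^ n := by
  have hbinom : ∀ x : ℚ, ∑ m ∈ range (n + 1), (n.choose m : ℚ) * x ^ m = (x + 1) ^ n := by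
    intro x
    rw [add_pow]
    exact sum_congr rfl fun m _ => by ring
  have hterm : ∀ m ∈ range (n + 1), n.choose m * (2 - E (n - m)) * ((c + 1) ^ m + (c - 1) ^ m) =
      2 * (n.choose m * (c + 1) ^ m) + 2 * (n.choose m * (c - 1) ^ m) -
        n.choose m * E (n - m) * ((c + 1) ^ m + (c - 1) ^ m) :=
    fun m _ => by ring
  rw [sum_congr rfl hterm, sum_sub_distrib, sum_add_distrib, ← mul_sum, ← mul_sum, hbinom, hbinom,
    sum_choose_mul_euler_mul_add_pow hE0 hEodd hErec]
  ring

theorem sum_choose_mul_two_sub_euler_div_mul_polyEulerSecondNeg (n k : ℕ) :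
    ∑ m ∈ range (n + 1), (n.choose m : ℚ) * ((2 - E (n - m)) / 4 ^ n) * polyEulerSecondNeg m k =
      polyBernoulliNeg k n := by
  have hterm : ∀ m ∈ range (n + 1),
      (n.choose m : ℚ) * ((2 - E (n - m)) / 4 ^ n) * polyEulerSecondNeg m k =
        ∑ l ∈ range (k + 1), (-1) ^ (k + l) * l ! * stirlingSecond k l / (2 * 4 ^ n) *
          (n.choose m * (2 - E (n - m)) * ((4 * l + 2 + 1) ^ m + (4 * l + 2 - 1) ^ m)) := by
    intro m _
    simp_rw [polyEulerSecondNeg, stirling2_eq_stirlingSecond, mul_sum]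
    exact sum_congr rfl fun l _ => by ring
  rw [sum_congr rfl hterm, sum_comm, polyBernoulliNeg]
  refine sum_congr rfl fun l _ => ?_
  rw [← mul_sum, sum_choose_mul_two_sub_euler_mul_add_pow hE0 hEodd hErec,
    show (4 * l + 2 + 2 : ℚ) = 4 * (l + 1) by ring, mul_pow]
  field_simp

end Euler

theorem polyEulerSecondNeg_duality (E : ℕ → ℚ) (hE0 : E 0 = 1)
    (hEodd : ∀ m : ℕ, E (2 * m + 1) = 0)
    (hErec : ∀ m : ℕ, 1 ≤ m →
      ∑ j ∈ Finset.range (m + 1), ((2 * m).choose (2 * j) : ℚ) * E (2 * j) = 0)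
    (n k : ℕ) :
    ∑ m ∈ Finset.range (n + 1),
        (n.choose m : ℚ) * ((2 - E (n - m)) / 4 ^ n) * polyEulerSecondNeg m k =
      ∑ m ∈ Finset.range (k + 1),
        (k.choose m : ℚ) * ((2 - E (k - m)) / 4 ^ k) * polyEulerSecondNeg m n := by
  rw [sum_choose_mul_two_sub_euler_div_mul_polyEulerSecondNeg hE0 hEodd hErec,
    sum_choose_mul_two_sub_euler_div_mul_polyEulerSecondNeg hE0 hEodd hErec, polyBernoulliNeg_comm]
end

section
/- Let p be an odd prime and let n and k be odd positive integers with k ≡ p − 2 (mod p−1). Then Ê_n^{(−k)} ≡ 0 (mod p). -/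
/-!
With `l! S(k,l) = Δˡ xᵏ |ₓ₌₀` and `w(l) = (4l+3)ⁿ + (4l+1)ⁿ`, the integer
`2 (-1)ᵏ Ê_n^{(-k)} = ∑ₗ (-1)ˡ Δˡ xᵏ |ₓ₌₀ w(l)` is even, since every `w(l)` is.
Modulo `p` the congruence on `k` gives `xᵏ = x^(p-2) = x⁻¹` on `𝔽_p`. Hence the terms with
`l ≥ p - 1` vanish (forward differences of a polynomial of degree `p - 2`), and the others are
`-H_l w(l)` with `H_l` the harmonic number, by the identity `∑ᵢ (-1)ⁱ C(l,i)/i = -H_l`.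
In `𝔽_p` we have `H_{p-1-l} = H_l` and, for odd `n`, `w(p-1-l) = -w(l)`, so the sum is
antisymmetric under `l ↦ p - 1 - l` and vanishes. As `p` is odd, `2p` divides the integer.
-/

open Finset

section FiniteDifferences

variable {R : Type*} [CommRing R]

theorem neg_one_pow_mul_fwdDiff_iter_zero (f : R → R) (l : ℕ) :
    (-1) ^ l * (fwdDiff 1)^[l] f 0 =
      ∑ i ∈ range (l + 1), (-1) ^ i * (l.choose i : R) * f i := by
  rw [fwdDiff_iter_eq_sum_shift, mul_sum]
  refine sum_congr rfl fun i hi => ?_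
  obtain ⟨d, rfl⟩ := Nat.exists_eq_add_of_le (Nat.lt_succ_iff.1 (mem_range.1 hi))
  simp only [zsmul_eq_mul, nsmul_eq_mul, mul_one, zero_add, Nat.add_sub_cancel_left]
  push_cast
  have hsq : ((-1 : R) ^ d) * (-1) ^ d = 1 := by rw [← mul_pow]; simp
  linear_combination ((-1 : R) ^ i * ((i + d).choose i : R) * f i) * hsq

theorem Int.cast_fwdDiff_iter_pow_zero (k l : ℕ) :
    (((fwdDiff 1)^[l] (fun x : ℤ => x ^ k) 0 : ℤ) : R) =
      (fwdDiff 1)^[l] (fun x : R => x ^ k) 0 := by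
  simp [fwdDiff_iter_eq_sum_shift]

theorem factorial_mul_stirling2_s17 (k l : ℕ) :
    (l.factorial : ℚ) * stirling2 k l = (fwdDiff 1)^[l] (fun x : ℚ => x ^ k) 0 := by
  rw [stirling2, ← mul_assoc, one_div, mul_inv_cancel₀ (by positivity), one_mul,
    fwdDiff_iter_eq_sum_shift]
  simp [zsmul_eq_mul]

end FiniteDifferences

section Harmonic

variable {K : Type*} [Field K]

theorem natCast_ne_zero_of_factorial_ne_zero {n i : ℕ} (hn : (n.factorial : K) ≠ 0)
    (hi : 0 < i) (hin : i ≤ n) : (i : K) ≠ 0 := fun h =>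
  hn <| zero_dvd_iff.1 <| h ▸ Nat.cast_dvd_cast (Nat.dvd_factorial hi hin)

theorem sum_neg_one_pow_mul_choose_mul_inv_succ {l : ℕ} (hl : ((l + 1).factorial : K) ≠ 0) :
    ∑ i ∈ range (l + 1), (-1) ^ i * (l.choose i : K) * ((i + 1 : ℕ) : K)⁻¹ =
      ((l + 1 : ℕ) : K)⁻¹ := by
  have halt : ∑ i ∈ range (l + 1), (-1) ^ i * ((l + 1).choose (i + 1) : K) = 1 := by
    have := congrArg (Int.cast : ℤ → K) (Int.alternating_sum_range_choose_of_ne l.succ_ne_zero)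
    push_cast at this
    rw [sum_range_succ'] at this
    rw [← neg_inj, ← sum_neg_distrib]
    simpa [pow_succ, add_eq_zero_iff_eq_neg] using this
  calc _ = ((l + 1 : ℕ) : K)⁻¹ *
        ∑ i ∈ range (l + 1), (-1) ^ i * ((l + 1).choose (i + 1) : K) := ?_
    _ = _ := by rw [halt, mul_one]
  rw [mul_sum]
  refine sum_congr rfl fun i hi => ?_
  have ha := natCast_ne_zero_of_factorial_ne_zero hl i.succ_pos (by simpa using hi)
  have hb := natCast_ne_zero_of_factorial_ne_zero hl l.succ_pos le_rfl
  have hc : ((l + 1 : ℕ) : K) * l.choose i = (l + 1).choose (i + 1) * ((i + 1 : ℕ) : K) := by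
    rw [← Nat.cast_mul, ← Nat.cast_mul, Nat.add_one_mul_choose_eq]
  generalize ((i + 1 : ℕ) : K) = a at ha hc ⊢
  generalize ((l + 1 : ℕ) : K) = b at hb hc ⊢
  have hquot : (l.choose i : K) * a⁻¹ = b⁻¹ * (l + 1).choose (i + 1) := by
    rw [eq_inv_mul_iff_mul_eq₀ hb, ← mul_assoc, hc, mul_assoc, mul_inv_cancel₀ ha, mul_one]
  rw [mul_assoc, hquot]
  ring

def harmonicSum (K : Type*) [DivisionRing K] (n : ℕ) : K :=
  ∑ i ∈ range n, ((i + 1 : ℕ) : K)⁻¹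

-- The `i = 0` term is `0`, as `(0 : K)⁻¹ = 0`.
theorem sum_neg_one_pow_mul_choose_mul_inv {l : ℕ} (hl : (l.factorial : K) ≠ 0) :
    ∑ i ∈ range (l + 1), (-1) ^ i * (l.choose i : K) * (i : K)⁻¹ = -harmonicSum K l := by
  induction l with
  | zero => simp [harmonicSum]
  | succ l ih =>
    have hl' : (l.factorial : K) ≠ 0 := fun h =>
      hl (by rw [Nat.factorial_succ, Nat.cast_mul, h, mul_zero])
    set f : ℕ → ℕ → K := fun m i => (-1) ^ i * (m.choose i : K) * (i : K)⁻¹ with hf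
    have hshift : ∑ i ∈ range (l + 1), f l (i + 1) = -harmonicSum K l := by
      rw [← ih hl']
      change _ = ∑ i ∈ range (l + 1), f l i
      rw [sum_range_succ (fun i => f l (i + 1)), sum_range_succ' (f l)]
      simp [hf]
    calc ∑ i ∈ range (l + 1 + 1), f (l + 1) i
        = ∑ i ∈ range (l + 1), f l (i + 1) -
            ∑ i ∈ range (l + 1), (-1) ^ i * (l.choose i : K) * ((i + 1 : ℕ) : K)⁻¹ := by
          rw [sum_range_succ', ← sum_sub_distrib]
          simp only [hf, Nat.choose_succ_succ', Nat.cast_add, Nat.cast_zero, inv_zero, mul_zero,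
            add_zero]
          exact sum_congr rfl fun i _ => by ring
      _ = -harmonicSum K (l + 1) := by
        rw [hshift, sum_neg_one_pow_mul_choose_mul_inv_succ hl, harmonicSum, harmonicSum,
          sum_range_succ]
        ring

theorem neg_one_pow_mul_fwdDiff_iter_inv_zero {l : ℕ} (hl : (l.factorial : K) ≠ 0) :
    (-1) ^ l * (fwdDiff 1)^[l] (·⁻¹) (0 : K) = -harmonicSum K l := by
  rw [neg_one_pow_mul_fwdDiff_iter_zero, sum_neg_one_pow_mul_choose_mul_inv hl]

end Harmonic

theorem sum_range_eq_zero_of_reflect_eq_neg {R : Type*} [Ring R] [NoZeroDivisors R]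
    (h2 : (2 : R) ≠ 0) {f : ℕ → R} {N : ℕ} (hf : ∀ l < N, f (N - 1 - l) = -f l) :
    ∑ l ∈ range N, f l = 0 := by
  have h : ∑ l ∈ range N, f l = -∑ l ∈ range N, f l := calc
    _ = ∑ l ∈ range N, f (N - 1 - l) := (sum_range_reflect f N).symm
    _ = -∑ l ∈ range N, f l := by
      rw [← sum_neg_distrib]
      exact sum_congr rfl fun l hl => hf l (mem_range.1 hl)
  rw [eq_neg_iff_add_eq_zero, ← two_mul] at h
  exact (mul_eq_zero.1 h).resolve_left h2

theorem pow_eq_inv_of_card_sub_one_dvd {F : Type*} [Field F] [Fintype F] {k : ℕ} (hk0 : k ≠ 0)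
    (hk : Fintype.card F - 1 ∣ k + 1) (x : F) : x ^ k = x⁻¹ := by
  rcases eq_or_ne x 0 with rfl | hx
  · rw [zero_pow hk0, inv_zero]
  · obtain ⟨m, hm⟩ := hk
    refine eq_inv_of_mul_eq_one_left ?_
    rw [← pow_succ, hm, pow_mul, FiniteField.pow_card_sub_one_eq_one x hx, one_pow]

theorem ZMod.natCast_eq_neg_of_add_eq {n a b : ℕ} (h : a + b = n) : (a : ZMod n) = -b :=
  eq_neg_of_add_eq_zero_left (by rw [← Nat.cast_add, h, ZMod.natCast_self])

section ZModPrime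

variable {p : ℕ} [Fact p.Prime]

theorem ZMod.two_ne_zero_of_ne_two (hp : p ≠ 2) : (2 : ZMod p) ≠ 0 :=
  Ring.two_ne_zero (by rwa [ZMod.ringChar_zmod_n])

theorem harmonicSum_zmod_add {a b : ℕ} (h : a + b + 1 = p) :
    harmonicSum (ZMod p) (a + b) = harmonicSum (ZMod p) a - harmonicSum (ZMod p) b := by
  rw [harmonicSum, sum_range_add, ← sum_range_reflect _ b, harmonicSum, harmonicSum,
    sub_eq_add_neg, ← sum_neg_distrib]
  congr 1
  refine sum_congr rfl fun j hj => ?_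
  have := mem_range.1 hj
  rw [ZMod.natCast_eq_neg_of_add_eq (b := j + 1) (by omega), inv_neg]

theorem harmonicSum_zmod_sub_one_eq_zero (hp : p ≠ 2) : harmonicSum (ZMod p) (p - 1) = 0 := by
  refine sum_range_eq_zero_of_reflect_eq_neg (ZMod.two_ne_zero_of_ne_two hp) fun j hj => ?_
  rw [ZMod.natCast_eq_neg_of_add_eq (b := j + 1) (by omega), inv_neg]

theorem harmonicSum_zmod_sub_one_sub (hp : p ≠ 2) {l : ℕ} (hl : l < p) :
    harmonicSum (ZMod p) (p - 1 - l) = harmonicSum (ZMod p) l := by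
  have h := harmonicSum_zmod_add (p := p) (a := p - 1 - l) (b := l) (by omega)
  rwa [Nat.sub_add_cancel (by omega), harmonicSum_zmod_sub_one_eq_zero hp, eq_comm,
    sub_eq_zero] at h

end ZModPrime

section PolyEuler

def eulerWeight {R : Type*} [CommRing R] (n : ℕ) (x : R) : R := (4 * x + 3) ^ n + (4 * x + 1) ^ n

theorem eulerWeight_neg_one_sub {R : Type*} [CommRing R] {n : ℕ} (hn : Odd n) (x : R) :
    eulerWeight n (-1 - x) = -eulerWeight n x := by
  have h3 : 4 * (-1 - x) + 3 = -(4 * x + 1) := by ring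
  have h1 : 4 * (-1 - x) + 1 = -(4 * x + 3) := by ring
  rw [eulerWeight, eulerWeight, h3, h1, hn.neg_pow, hn.neg_pow]
  ring

theorem even_eulerWeight (n : ℕ) (x : ℤ) : Even (eulerWeight n x) :=
  (Odd.pow ⟨2 * x + 1, by ring⟩).add_odd (Odd.pow ⟨2 * x, by ring⟩)

def polyEulerSum (R : Type*) [CommRing R] (n k : ℕ) : R :=
  ∑ l ∈ range (k + 1), (-1) ^ l * (fwdDiff 1)^[l] (fun x : R => x ^ k) 0 * eulerWeight n (l : R)

theorem Int.cast_polyEulerSum {R : Type*} [CommRing R] (n k : ℕ) :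
    ((polyEulerSum ℤ n k : ℤ) : R) = polyEulerSum R n k := by
  simp [polyEulerSum, eulerWeight, Int.cast_fwdDiff_iter_pow_zero]

theorem polyEulerSecondNeg_eq_polyEulerSum (n k : ℕ) :
    polyEulerSecondNeg n k = (-1) ^ k / 2 * polyEulerSum ℚ n k := by
  simp only [polyEulerSecondNeg, polyEulerSum, eulerWeight, mul_assoc, factorial_mul_stirling2_s17]

theorem two_dvd_polyEulerSum (n k : ℕ) : 2 ∣ polyEulerSum ℤ n k :=
  dvd_sum fun l _ => (even_eulerWeight n l).two_dvd.mul_left _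

theorem sum_harmonicSum_mul_eulerWeight_zmod {p : ℕ} [Fact p.Prime] (hp : p ≠ 2) {n : ℕ}
    (hn : Odd n) : ∑ l ∈ range p, harmonicSum (ZMod p) l * eulerWeight n (l : ZMod p) = 0 := by
  refine sum_range_eq_zero_of_reflect_eq_neg (ZMod.two_ne_zero_of_ne_two hp) fun l hl => ?_
  have hcast : ((p - 1 - l : ℕ) : ZMod p) = -1 - l := by
    rw [ZMod.natCast_eq_neg_of_add_eq (b := l + 1) (by omega)]
    push_cast
    ring
  rw [harmonicSum_zmod_sub_one_sub hp hl, hcast, eulerWeight_neg_one_sub hn, mul_neg]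

theorem polyEulerSum_zmod_eq_zero {p : ℕ} [Fact p.Prime] (hp : p ≠ 2) {n k : ℕ} (hn : Odd n)
    (hk : p - 1 ∣ k + 1) : polyEulerSum (ZMod p) n k = 0 := by
  have hp3 : 3 ≤ p := by have := (Fact.out : p.Prime).two_le; omega
  have hk0 : k ≠ 0 := by rintro rfl; have := Nat.le_of_dvd one_pos hk; omega
  have hpow : (fun x : ZMod p => x ^ k) = (·⁻¹) :=
    funext <| pow_eq_inv_of_card_sub_one_dvd hk0 (by rwa [ZMod.card])
  have hpow' : (fun x : ZMod p => x ^ (p - 2)) = (·⁻¹) :=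
    funext <| pow_eq_inv_of_card_sub_one_dvd (by omega) ⟨1, by rw [ZMod.card]; omega⟩
  set g : ℕ → ZMod p := fun l =>
    (-1) ^ l * (fwdDiff 1)^[l] (·⁻¹) 0 * eulerWeight n (l : ZMod p)
  have hg : ∀ l ≥ p - 1, g l = 0 := fun l hl => by
    simp [g, ← hpow', fwdDiff_iter_pow_eq_zero_of_lt (by omega : p - 2 < l)]
  calc polyEulerSum (ZMod p) n k = ∑ l ∈ range p, g l := by
        rw [polyEulerSum, hpow, eventually_constant_sum hg (Nat.le_of_dvd k.succ_pos hk),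
          eventually_constant_sum hg (by omega : p - 1 ≤ p)]
    _ = -∑ l ∈ range p, harmonicSum (ZMod p) l * eulerWeight n (l : ZMod p) := by
        rw [← sum_neg_distrib]
        refine sum_congr rfl fun l hl => ?_
        have hfact : (l.factorial : ZMod p) ≠ 0 := by
          rw [Ne, ZMod.natCast_eq_zero_iff, (Fact.out : p.Prime).dvd_factorial]
          simpa using hl
        simp only [g, neg_one_pow_mul_fwdDiff_iter_inv_zero hfact, neg_mul]
    _ = 0 := by rw [sum_harmonicSum_mul_eulerWeight_zmod hp hn, neg_zero]

end PolyEuler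

theorem polyEulerSecondNeg_congr_zero_general (p : ℕ) (hp : Nat.Prime p) (hpodd : Odd p)
    (n k : ℕ) (hn : Odd n) (hcong : k ≡ p - 2 [MOD p - 1]) :
    ∃ z : ℤ, polyEulerSecondNeg n k = (p : ℚ) * (z : ℚ) := by
  have := Fact.mk hp
  have hp2 : p ≠ 2 := by rintro rfl; exact (Nat.not_odd_iff_even.2 even_two) hpodd
  have hdvd : p - 1 ∣ k + 1 := Nat.modEq_zero_iff_dvd.1 <|
    (hcong.add_right 1).trans <| Nat.modEq_zero_iff_dvd.2 ⟨1, by have := hp.two_le; omega⟩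
  have hzmod : ((polyEulerSum ℤ n k : ℤ) : ZMod p) = 0 := by
    rw [Int.cast_polyEulerSum, polyEulerSum_zmod_eq_zero hp2 hn hdvd]
  obtain ⟨z, hz⟩ : (2 * p : ℤ) ∣ polyEulerSum ℤ n k :=
    (Nat.isCoprime_iff_coprime.2 (Nat.coprime_two_left.2 hpodd)).mul_dvd
      (two_dvd_polyEulerSum n k) ((ZMod.intCast_zmod_eq_zero_iff_dvd _ p).1 hzmod)
  refine ⟨(-1) ^ k * z, ?_⟩
  rw [polyEulerSecondNeg_eq_polyEulerSum, ← Int.cast_polyEulerSum, hz]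
  push_cast
  ring

theorem polyEulerSecondNeg_congr_zero (p : ℕ) (hp : Nat.Prime p) (hpodd : Odd p)
    (n k : ℕ) (hn : Odd n) (hk : Odd k) (hnpos : 0 < n) (hkpos : 0 < k)
    (hcong : k ≡ p - 2 [MOD p - 1]) :
    ∃ z : ℤ, polyEulerSecondNeg n k = (p : ℚ) * (z : ℚ) :=
  polyEulerSecondNeg_congr_zero_general p hp hpodd n k hn hcong
end

section
/- For all integers N ≥ 0 and n ≥ 1, E_{N,2n} = (−1)ⁿ · (2n)! · det M, where M is the n×n matrix whose (i,j) entry (1 ≤ i, j ≤ n) is (2N)!/(2N+2(i−j)+2)! if j ≤ i, 1 if j = i+1, and 0 if j > i+1. (Its first column is (2N)!/(2N+2)!, (2N)!/(2N+4)!, …, (2N)!/(2N+2n)!.) -/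
/-!
Put `y m = E_{N,m} / (2m)!` and `c k = (2N)! / (2N + 2k + 2)!`. Multiplied by `(2N)!`, the
defining recurrence says `∑_{j ≤ m} c (m - j) y j + y (m + 1) = 0`, i.e. the vector
`(y 0, …, y (n-1))` solves `H y = -y n · e_{n-1}` for the Toeplitz–Hessenberg matrix `H` of the
statement. Cramer's rule for the coordinate `y 0 = 1` gives `det H = (-1)ⁿ y n`, because the
relevant cofactor is the determinant of a unitriangular matrix.
-/

open Finset Matrix

section ToeplitzHessenberg

variable {R : Type*} [CommRing R]

def toeplitzHessenberg (c : ℕ → R) (n : ℕ) : Matrix (Fin n) (Fin n) R :=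
  of fun i j => if (j : ℕ) ≤ i then c (i - j) else if (j : ℕ) = i + 1 then 1 else 0

theorem det_toeplitzHessenberg_submatrix_castSucc_succ (c : ℕ → R) (m : ℕ) :
    ((toeplitzHessenberg c (m + 1)).submatrix Fin.castSucc Fin.succ).det = 1 := by
  rw [det_of_isLowerTriangular]
  · exact prod_eq_one fun i _ => by simp [toeplitzHessenberg]
  · intro i j hij
    have hij : (i : ℕ) < j := hij
    simp only [toeplitzHessenberg, submatrix_apply, of_apply, Fin.val_castSucc, Fin.val_succ]
    split_ifs <;> first | rfl | omega

theorem toeplitzHessenberg_mulVec_apply (c y : ℕ → R) {m : ℕ} (i : Fin (m + 1)) :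
    (toeplitzHessenberg c (m + 1) *ᵥ fun j => y j) i =
      ∑ j ∈ range (i + 1), c (i - j) * y j + if (i : ℕ) < m then y (i + 1) else 0 := by
  simp only [mulVec, dotProduct, toeplitzHessenberg, of_apply]
  rw [Fin.sum_univ_eq_sum_range (fun j => (if j ≤ i then c (i - j) else
    if j = i + 1 then 1 else 0) * y j), ← sum_range_add_sum_Ico _ i.isLt]
  congr 1
  · refine sum_congr rfl fun j hj => ?_
    rw [if_pos (Nat.lt_succ_iff.mp (mem_range.mp hj))]
  · have hterm : ∀ j ∈ Ico ((i : ℕ) + 1) (m + 1),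
        (if j ≤ i then c (i - j) else if j = i + 1 then 1 else 0) * y j =
          if (i : ℕ) + 1 = j then y j else 0 := by
      intro j hj
      rw [mem_Ico] at hj
      split_ifs <;> first | omega | simp
    rw [sum_congr rfl hterm, sum_ite_eq]
    simp

theorem toeplitzHessenberg_mulVec {c y : ℕ → R}
    (hy : ∀ m, ∑ j ∈ range (m + 1), c (m - j) * y j + y (m + 1) = 0) (m : ℕ) :
    toeplitzHessenberg c (m + 1) *ᵥ (fun j => y j) = Pi.single (Fin.last m) (-y (m + 1)) := by
  ext i
  rw [toeplitzHessenberg_mulVec_apply, Pi.single_apply]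
  split_ifs with hlt hlast hlast
  · exact absurd (congrArg Fin.val hlast) (by rw [Fin.val_last]; omega)
  · exact hy i
  · subst hlast
    simpa [eq_neg_iff_add_eq_zero] using hy m
  · exact absurd (Fin.ext (by rw [Fin.val_last]; omega)) hlast

theorem det_toeplitzHessenberg {c y : ℕ → R} (hy0 : y 0 = 1)
    (hy : ∀ m, ∑ j ∈ range (m + 1), c (m - j) * y j + y (m + 1) = 0) (n : ℕ) :
    (toeplitzHessenberg c n).det = (-1) ^ n * y n := by
  cases n with
  | zero => simp [hy0]
  | succ m =>
    set H := toeplitzHessenberg c (m + 1)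
    have hcramer : H.det * y 0 = adjugate H 0 (Fin.last m) * -y (m + 1) :=
      calc H.det * y 0 = (adjugate H *ᵥ (H *ᵥ fun j => y j)) 0 := by
            simp [mulVec_mulVec, adjugate_mul, smul_mulVec]
        _ = adjugate H 0 (Fin.last m) * -y (m + 1) := by
            rw [toeplitzHessenberg_mulVec hy]
            exact dotProduct_single _ _ _
    rw [adjugate_fin_succ_eq_det_submatrix, Fin.succAbove_last, Fin.succAbove_zero,
      det_toeplitzHessenberg_submatrix_castSucc_succ, hy0] at hcramer
    rw [← mul_one H.det, hcramer]
    simp [pow_succ]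

end ToeplitzHessenberg

theorem hypergeomEuler_toeplitz_recurrence (N : ℕ) {e : ℕ → ℚ}
    (he : ∀ m : ℕ, 1 ≤ m →
      ∑ i ∈ range (m + 1),
        e (2 * i) / (((2 * N + 2 * m - 2 * i).factorial : ℚ) * ((2 * i).factorial : ℚ)) = 0)
    (m : ℕ) :
    ∑ j ∈ range (m + 1), ((2 * N).factorial : ℚ) / (2 * N + 2 * (m - j) + 2).factorial *
        (e (2 * j) / (2 * j).factorial) + e (2 * (m + 1)) / (2 * (m + 1)).factorial = 0 := by
  have h := he (m + 1) (Nat.le_add_left 1 m)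
  rw [sum_range_succ, Nat.add_sub_cancel] at h
  convert congrArg (((2 * N).factorial : ℚ) * ·) h using 1
  · rw [mul_add (((2 * N).factorial : ℚ)), mul_sum]
    congr 1
    · refine sum_congr rfl fun j hj => ?_
      rw [show 2 * N + 2 * (m + 1) - 2 * j = 2 * N + 2 * (m - j) + 2 by
        have := mem_range.mp hj; omega]
      ring
    · field_simp
  · rw [mul_zero]

theorem hypergeomEuler_det_general (N : ℕ) (E : ℕ → ℕ → ℚ)
    (hE0 : ∀ M : ℕ, E M 0 = 1)
    (hErec : ∀ M m : ℕ, 1 ≤ m →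
      ∑ i ∈ Finset.range (m + 1),
        E M (2 * i) /
          (((2 * M + 2 * m - 2 * i).factorial : ℚ) * ((2 * i).factorial : ℚ)) = 0)
    (n : ℕ) :
    E N (2 * n) =
      (-1) ^ n * ((2 * n).factorial : ℚ) *
        Matrix.det (Matrix.of fun i j : Fin n =>
          if (j : ℕ) ≤ (i : ℕ) then
            ((2 * N).factorial : ℚ) / ((2 * N + 2 * ((i : ℕ) - (j : ℕ)) + 2).factorial : ℚ)
          else if (j : ℕ) = (i : ℕ) + 1 then 1 else 0) := by
  have hdet := det_toeplitzHessenberg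
    (c := fun k => ((2 * N).factorial : ℚ) / (2 * N + 2 * k + 2).factorial)
    (y := fun m => E N (2 * m) / (2 * m).factorial) (by simp [hE0])
    (hypergeomEuler_toeplitz_recurrence N (hErec N)) n
  rw [toeplitzHessenberg] at hdet
  rw [hdet]
  field_simp
  rw [← pow_mul, pow_mul', neg_one_sq, one_pow, mul_one]

theorem hypergeomEuler_det (N : ℕ) (E : ℕ → ℕ → ℚ)
    (hE0 : ∀ M : ℕ, E M 0 = 1)
    (hEodd : ∀ M m : ℕ, E M (2 * m + 1) = 0)
    (hErec : ∀ M m : ℕ, 1 ≤ m →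
      ∑ i ∈ Finset.range (m + 1),
        E M (2 * i) /
          (((2 * M + 2 * m - 2 * i).factorial : ℚ) * ((2 * i).factorial : ℚ)) = 0)
    (n : ℕ) (hn : 1 ≤ n) :
    E N (2 * n) =
      (-1) ^ n * ((2 * n).factorial : ℚ) *
        Matrix.det (Matrix.of fun i j : Fin n =>
          if (j : ℕ) ≤ (i : ℕ) then
            ((2 * N).factorial : ℚ) / ((2 * N + 2 * ((i : ℕ) - (j : ℕ)) + 2).factorial : ℚ)
          else if (j : ℕ) = (i : ℕ) + 1 then 1 else 0) :=
  hypergeomEuler_det_general N E hE0 hErec n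
end
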